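/- arXiv:2512.23807 — 2 statements merged into one kernel-verified Lean document; each statement's English description precedes it below -/
import Mathlib

section
/- Suppose (μ_j)_{j∈ℕ} is a sequence of positive reals and there exist constants c₁, c₂ > 0 and d ∈ {1,2,3} such that c₁·j^{2/d} ≤ μ_j ≤ c₂·j^{2/d} for all sufficiently large j. Then the series ∑_{j=1}^∞ μ_j^{−d/2−1}·(T³μ_j/6 + (T²√μ_j/4)·sin(2T√μ_j) − sin(2T√μ_j)/(8√μ_j) − (T/4)·cos(2T√μ_j) + T/2) diverges to infinity for every T > 0. -/
/-!
Put `x = T√μ`. The bracket is `T³μ/6` plus terms of order `T²√μ`, so it exceeds `T³μ/12` once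
`x ≥ 3`, which holds for large `j` because `μ_j → ∞` by the lower Weyl bound. The summand is
then at least `(T³/12) μ_j^{-d/2}`, which the upper Weyl bound turns into `(T³/12) c₂^{-d/2} / j`;
the series diverges by comparison with the harmonic series.
-/

open Filter Finset Real

theorem sum_Icc_one_eq_sum_range_succ {M : Type*} [AddCommMonoid M] (f : ℕ → M) (n : ℕ) :
    ∑ j ∈ Icc 1 n, f j = ∑ k ∈ range n, f (k + 1) := by
  rw [range_eq_Ico, sum_Ico_add' f 0 n 1]
  rfl

theorem tendsto_sum_range_atTop_of_eventually_le {f g : ℕ → ℝ} (hfg : ∀ᶠ k in atTop, f k ≤ g k)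
    (hf : Tendsto (fun n => ∑ k ∈ range n, f k) atTop atTop) :
    Tendsto (fun n => ∑ k ∈ range n, g k) atTop atTop := by
  obtain ⟨N, hN⟩ := eventually_atTop.mp hfg
  have hbdd : ∀ᶠ n in atTop, ∑ k ∈ range N, (g k - f k) ≤ ∑ k ∈ range n, (g k - f k) := by
    filter_upwards [eventually_ge_atTop N] with n hn
    rw [← sum_range_add_sum_Ico _ hn, le_add_iff_nonneg_right]
    exact sum_nonneg fun k hk => sub_nonneg.mpr (hN k (mem_Ico.mp hk).1)
  refine (tendsto_atTop_add_left_of_le' atTop _ hbdd hf).congr fun n => ?_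
  rw [← sum_add_distrib]
  simp only [sub_add_cancel]

theorem tendsto_sum_Icc_atTop_of_eventually_div_le {f : ℕ → ℝ} {K : ℝ} (hK : 0 < K)
    (h : ∀ᶠ j : ℕ in atTop, K / j ≤ f j) :
    Tendsto (fun n => ∑ j ∈ Icc 1 n, f j) atTop atTop := by
  simp only [sum_Icc_one_eq_sum_range_succ]
  have hharmonic : Tendsto (fun n => ∑ k ∈ range n, K / ((k : ℝ) + 1)) atTop atTop := by
    simpa only [mul_sum, mul_one_div] using
      tendsto_sum_range_one_div_nat_succ_atTop.const_mul_atTop hK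
  refine tendsto_sum_range_atTop_of_eventually_le ?_ hharmonic
  filter_upwards [(tendsto_add_atTop_nat 1).eventually h] with k hk
  simpa only [Nat.cast_succ] using hk

theorem div_le_rpow_neg_of_le_mul_rpow {μ c x a b : ℝ} (hμ : 0 < μ) (hc : 0 ≤ c) (hx : 0 ≤ x)
    (hb : 0 ≤ b) (hab : a * b = 1) (h : μ ≤ c * x ^ a) : c ^ (-b) / x ≤ μ ^ (-b) := by
  calc c ^ (-b) / x = (c * x ^ a) ^ (-b) := by
        rw [mul_rpow hc (rpow_nonneg hx a), ← rpow_mul hx, mul_neg, hab, rpow_neg_one,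
          div_eq_mul_inv]
    _ ≤ μ ^ (-b) := rpow_le_rpow_of_nonpos hμ h (neg_nonpos.mpr hb)

/-- `‖v''‖²_{L²(0,T)}` for `v(t) = ∫₀ᵗ s sin(√μ s) ds`. -/
noncomputable def vttNormSq (T μ : ℝ) : ℝ :=
  T ^ 3 * μ / 6
    + T ^ 2 * √μ / 4 * sin (2 * T * √μ)
    - sin (2 * T * √μ) / (8 * √μ)
    - T / 4 * cos (2 * T * √μ)
    + T / 2

theorem le_vttNormSq {T μ : ℝ} (hμ : 0 < μ) (hTμ : 3 ≤ T * √μ) :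
    T ^ 3 * μ / 12 ≤ vttNormSq T μ := by
  unfold vttNormSq
  set s := √μ
  have hs : 0 < s := sqrt_pos.mpr hμ
  have hT : 0 < T := pos_of_mul_pos_left (by linarith) hs.le
  have hμs : T ^ 3 * μ = T ^ 3 * s ^ 2 := by rw [sq_sqrt hμ.le]
  have hsin_div : sin (2 * T * s) / (8 * s) ≤ T / 4 := by
    rw [div_le_iff₀ (by positivity)]
    nlinarith [sin_le_one (2 * T * s)]
  -- the bracket minus `T³μ/12` splits into four nonnegative pieces
  linarith [mul_nonneg (by positivity : (0:ℝ) ≤ T ^ 2 * s) (by linarith : (0:ℝ) ≤ T * s - 3),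
    mul_nonneg (by positivity : (0:ℝ) ≤ T ^ 2 * s) (by linarith [neg_one_le_sin (2 * T * s)] :
      (0:ℝ) ≤ sin (2 * T * s) + 1),
    mul_nonneg hT.le (by linarith [cos_le_one (2 * T * s)] : (0:ℝ) ≤ 1 - cos (2 * T * s))]

theorem eventually_le_vttNormSq {T : ℝ} (hT : 0 < T) :
    ∀ᶠ μ in atTop, T ^ 3 * μ / 12 ≤ vttNormSq T μ := by
  have hsqrt : ∀ᶠ μ in atTop, 3 / T ≤ √μ := tendsto_sqrt_atTop.eventually_ge_atTop _
  filter_upwards [hsqrt, eventually_gt_atTop 0] with μ hsqrtμ hμ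
  exact le_vttNormSq hμ (by rwa [div_le_iff₀' hT] at hsqrtμ)

theorem stmt_5 (T : ℝ) (hT : 0 < T) (d : ℕ) (hd : d = 1 ∨ d = 2 ∨ d = 3)
    (μ : ℕ → ℝ) (hμ : ∀ j, 0 < μ j)
    (c₁ c₂ : ℝ) (hc₁ : 0 < c₁) (hc₂ : 0 < c₂)
    (hW : ∀ᶠ j : ℕ in atTop,
      c₁ * (j : ℝ) ^ ((2:ℝ)/d) ≤ μ j ∧ μ j ≤ c₂ * (j : ℝ) ^ ((2:ℝ)/d)) :
    Tendsto (fun n : ℕ => ∑ j ∈ Finset.Icc 1 n,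
        (μ j) ^ (-(d:ℝ)/2 - 1) *
          (T ^ 3 * μ j / 6
            + T ^ 2 * Real.sqrt (μ j) / 4 * Real.sin (2 * T * Real.sqrt (μ j))
            - Real.sin (2 * T * Real.sqrt (μ j)) / (8 * Real.sqrt (μ j))
            - T / 4 * Real.cos (2 * T * Real.sqrt (μ j))
            + T / 2)) atTop atTop := by
  have hd0 : (0:ℝ) < d := by rcases hd with h | h | h <;> simp [h]
  have hμtop : Tendsto μ atTop atTop := by
    refine tendsto_atTop_mono' atTop (hW.mono fun j hj => hj.1) ?_
    exact ((tendsto_rpow_atTop (by positivity)).comp tendsto_natCast_atTop_atTop).const_mul_atTop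
      hc₁
  have hK : 0 < T ^ 3 / 12 * c₂ ^ (-(d:ℝ)/2) := by positivity
  refine tendsto_sum_Icc_atTop_of_eventually_div_le hK ?_
  filter_upwards [hW, hμtop.eventually (eventually_le_vttNormSq hT)] with j hWj hvj
  have hweyl : c₂ ^ (-(d:ℝ)/2) / j ≤ μ j ^ (-(d:ℝ)/2) := by
    rw [neg_div]
    exact div_le_rpow_neg_of_le_mul_rpow (hμ j) hc₂.le j.cast_nonneg (by positivity)
      (by field_simp) hWj.2
  calc T ^ 3 / 12 * c₂ ^ (-(d:ℝ)/2) / j = T ^ 3 / 12 * (c₂ ^ (-(d:ℝ)/2) / j) := by ring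
    _ ≤ T ^ 3 / 12 * μ j ^ (-(d:ℝ)/2) := by gcongr
    _ = μ j ^ (-(d:ℝ)/2 - 1) * (T ^ 3 * μ j / 12) := by
        rw [rpow_sub_one (hμ j).ne']
        field_simp [(hμ j).ne']
    _ ≤ μ j ^ (-(d:ℝ)/2 - 1) * vttNormSq T (μ j) :=
        mul_le_mul_of_nonneg_left hvj (rpow_nonneg (hμ j).le _)
end

section
/- Let Ω = (0,π) ⊂ ℝ (so d = 1, μ_j = j², φ_j(x) = √(2/π)·sin(j x)) and T > 0. Define u(x,t) = ∑_{j=1}^∞ φ_j(x)·j^{−3/2}·∫₀ᵗ s·sin(j s) ds. Then the series ∑_{j=1}^∞ j^{−3}·∫₀ᵀ (∂_{tt}∫₀ᵗ s·sin(j s) ds)² dt = ∑_{j=1}^∞ j^{−3}·∫₀ᵀ (sin(j t) + j t cos(j t))² dt diverges. -/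
/-! Pointwise, `(sin (j t) + j t cos (j t))² ≥ (j t cos (j t))² / 2 - 1`, and an explicit
antiderivative gives `∫₀ᵀ t² cos² (j t) dt = T³/6 + O(1/j)`. So the `j`-th term is at least
`T³/(12 j) - O(1/j²)`, and the series diverges by comparison with the harmonic series. -/

open Real intervalIntegral

lemma integral_sq_mul_cos_sq {c : ℝ} (hc : c ≠ 0) (T : ℝ) :
    ∫ t in (0:ℝ)..T, t ^ 2 * cos (c * t) ^ 2 =
      T ^ 3 / 6 + T ^ 2 * sin (2 * c * T) / (4 * c) + T * cos (2 * c * T) / (4 * c ^ 2)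
        - sin (2 * c * T) / (8 * c ^ 3) := by
  have hsin t : HasDerivAt (fun x => sin (2 * c * x)) (cos (2 * c * t) * (2 * c)) t := by
    simpa using ((hasDerivAt_id t).const_mul (2 * c)).sin
  have hcos t : HasDerivAt (fun x => cos (2 * c * x)) (-sin (2 * c * t) * (2 * c)) t := by
    simpa using ((hasDerivAt_id t).const_mul (2 * c)).cos
  have hF t : HasDerivAt (fun x => x ^ 3 / 6 + x ^ 2 * sin (2 * c * x) / (4 * c)
      + x * cos (2 * c * x) / (4 * c ^ 2) - sin (2 * c * x) / (8 * c ^ 3))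
      (t ^ 2 * cos (c * t) ^ 2) t := by
    refine ((((hasDerivAt_pow 3 t).div_const 6).add
      (((hasDerivAt_pow 2 t).mul (hsin t)).div_const (4 * c))).add
      (((hasDerivAt_id t).mul (hcos t)).div_const (4 * c ^ 2))).sub
      ((hsin t).div_const (8 * c ^ 3)) |>.congr_deriv ?_
    rw [cos_sq, id_eq, mul_assoc 2 c t]
    field_simp
    ring
  rw [integral_eq_sub_of_hasDerivAt (fun t _ => hF t)
    ((by fun_prop : Continuous _).intervalIntegrable _ _)]
  simp

lemma integral_sq_mul_cos_sq_ge {c T : ℝ} (hc : 0 < c) (hT : 0 ≤ T) :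
    T ^ 3 / 6 - T ^ 2 / (4 * c) - T / (4 * c ^ 2) - 1 / (8 * c ^ 3) ≤
      ∫ t in (0:ℝ)..T, t ^ 2 * cos (c * t) ^ 2 := by
  rw [integral_sq_mul_cos_sq hc.ne']
  have h₁ : -(T ^ 2 / (4 * c)) ≤ T ^ 2 * sin (2 * c * T) / (4 * c) := by
    rw [neg_div', div_le_div_iff_of_pos_right (by positivity)]
    nlinarith [neg_one_le_sin (2 * c * T), sq_nonneg T]
  have h₂ : -(T / (4 * c ^ 2)) ≤ T * cos (2 * c * T) / (4 * c ^ 2) := by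
    rw [neg_div', div_le_div_iff_of_pos_right (by positivity)]
    nlinarith [neg_one_le_cos (2 * c * T)]
  have h₃ : sin (2 * c * T) / (8 * c ^ 3) ≤ 1 / (8 * c ^ 3) :=
    div_le_div_of_nonneg_right (sin_le_one _) (by positivity)
  linarith

lemma sq_add_ge_half_sq_sub_sq (a b : ℝ) : b ^ 2 / 2 - a ^ 2 ≤ (a + b) ^ 2 := by
  nlinarith [sq_nonneg (2 * a + b)]

lemma integral_sin_add_mul_cos_sq_ge {c T : ℝ} (hc : 1 ≤ c) (hT : 0 ≤ T) :
    c ^ 2 * T ^ 3 / 12 - c * (T ^ 2 / 8 + 9 * T / 8 + 1 / 16) ≤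
      ∫ t in (0:ℝ)..T, (sin (c * t) + c * t * cos (c * t)) ^ 2 := by
  have hc₀ : 0 < c := one_pos.trans_le hc
  have hpointwise : ∀ t ∈ Set.Icc 0 T,
      c ^ 2 / 2 * (t ^ 2 * cos (c * t) ^ 2) - 1 ≤ (sin (c * t) + c * t * cos (c * t)) ^ 2 :=
    fun t _ => by
      nlinarith [sq_add_ge_half_sq_sub_sq (sin (c * t)) (c * t * cos (c * t)),
        sin_sq_le_one (c * t)]
  have hmono := integral_mono_on (μ := MeasureTheory.volume) hT
    ((by fun_prop : Continuous _).intervalIntegrable _ _)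
    ((by fun_prop : Continuous _).intervalIntegrable _ _) hpointwise
  rw [integral_sub ((by fun_prop : Continuous _).intervalIntegrable _ _) intervalIntegrable_const,
    integral_const_mul, integral_const, smul_eq_mul, mul_one, sub_zero] at hmono
  have hcos := mul_le_mul_of_nonneg_left (integral_sq_mul_cos_sq_ge hc₀ hT)
    (by positivity : 0 ≤ c ^ 2 / 2)
  have hexpand : c ^ 2 / 2 * (T ^ 3 / 6 - T ^ 2 / (4 * c) - T / (4 * c ^ 2) - 1 / (8 * c ^ 3))
      = c ^ 2 * T ^ 3 / 12 - c * T ^ 2 / 8 - T / 8 - 1 / (16 * c) := by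
    field_simp
    ring
  have hinv : 1 / (16 * c) ≤ c / 16 := by
    rw [div_le_div_iff₀ (by positivity) (by positivity)]
    nlinarith
  linarith [mul_nonneg (sub_nonneg.2 hc) hT]

lemma rpow_neg_three_mul_integral_ge {c T : ℝ} (hc : 1 ≤ c) (hT : 0 ≤ T) :
    T ^ 3 / 12 / c - (T ^ 2 / 8 + 9 * T / 8 + 1 / 16) / c ^ 2 ≤
      c ^ (-(3:ℝ)) * ∫ t in (0:ℝ)..T, (sin (c * t) + c * t * cos (c * t)) ^ 2 := by
  have hc₀ : 0 < c := one_pos.trans_le hc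
  rw [rpow_neg_ofNat, zpow_neg, zpow_ofNat]
  calc T ^ 3 / 12 / c - (T ^ 2 / 8 + 9 * T / 8 + 1 / 16) / c ^ 2
      = (c ^ 3)⁻¹ * (c ^ 2 * T ^ 3 / 12 - c * (T ^ 2 / 8 + 9 * T / 8 + 1 / 16)) := by
        field_simp
    _ ≤ _ := by gcongr; exact integral_sin_add_mul_cos_sq_ge hc hT

lemma not_summable_of_div_sub_div_sq_le {a : ℕ → ℝ} {A B : ℝ} (hA : 0 < A)
    (h : ∀ j : ℕ, A / j - B / j ^ 2 ≤ a j) : ¬ Summable a := by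
  intro ha
  have hB : Summable fun j : ℕ => B / (j : ℝ) ^ 2 := by
    simpa [div_eq_mul_one_div B] using
      (summable_one_div_nat_pow.mpr one_lt_two).mul_left B
  have hAj : Summable fun j : ℕ => A / (j : ℝ) :=
    (ha.add hB).of_nonneg_of_le (fun j => by positivity) fun j => by linarith [h j]
  apply not_summable_one_div_natCast
  simpa [div_eq_mul_one_div A, hA.ne'] using hAj.mul_left A⁻¹

theorem stmt_15 (T : ℝ) (hT : 0 < T) :
    ¬ Summable (fun j : ℕ =>
        (j : ℝ) ^ (-(3:ℝ)) *
          ∫ t in (0:ℝ)..T,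
            (Real.sin (j * t) + (j : ℝ) * t * Real.cos (j * t)) ^ 2) := by
  refine not_summable_of_div_sub_div_sq_le (by positivity : 0 < T ^ 3 / 12)
    (B := T ^ 2 / 8 + 9 * T / 8 + 1 / 16) fun j => ?_
  rcases j.eq_zero_or_pos with rfl | hj
  · simp [zero_rpow (by norm_num : (-(3:ℝ)) ≠ 0)]
  · exact rpow_neg_three_mul_integral_ge (by exact_mod_cast hj) hT.le
end
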